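/- Let J ⊆ R = ℂ[x_1,…,x_N] be a monomial ideal that is saturated with respect to the maximal ideal of the origin (J : m^∞ = J), and suppose its local Hilbert function H_J is eventually equal to a constant μ ≥ 1 (i.e., J is one-dimensional with multiplicity μ at the origin). Then H_J(k) = μ for all k ≥ μ − 1; in other words, the regularity index of the local Hilbert function of J is at most μ − 1. -/

import Mathlib

open MvPolynomial

noncomputable section

/-- The polynomial ring `R = ℂ[x_1,…,x_N]`, with variables indexed by `Fin N`. -/
abbrev PolyR (N : ℕ) := MvPolynomial (Fin N) ℂ

/-- A dual functional `q = Σ_α c_α ∂^α` is encoded by its coefficient vector, i.e.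
by an element of `MvPolynomial (Fin N) ℂ` (which is exactly the space of finitely
supported functions `ℕ^N →₀ ℂ`).  Its application to a polynomial `f` is
`q(f) = Σ_α c_α · (coefficient of x^α in f)`. -/
def dapply {N : ℕ} (q f : PolyR N) : ℂ := ∑ α ∈ f.support, q.coeff α * f.coeff α

/-- The Macaulay dual space `D_0[I]` of an ideal `I`, as a `ℂ`-subspace of `D_0`. -/
def dualSpace {N : ℕ} (I : Ideal (PolyR N)) : Submodule ℂ (PolyR N) where
  carrier := {q | ∀ f ∈ I, dapply q f = 0}
  zero_mem' := by intro f _; simp [dapply]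
  add_mem' := by
    intro a b ha hb f hf
    have h : dapply (a + b) f = dapply a f + dapply b f := by
      simp [dapply, MvPolynomial.coeff_add, add_mul, Finset.sum_add_distrib]
    rw [h, ha f hf, hb f hf, add_zero]
  smul_mem' := by
    intro c q hq f hf
    have h : dapply (c • q) f = c * dapply q f := by
      simp [dapply, MvPolynomial.coeff_smul, Finset.mul_sum, mul_assoc]
    rw [h, hq f hf, mul_zero]

/-- The subspace of dual functionals all of whose exponents satisfy `P`. -/
def expSupported {N : ℕ} (P : (Fin N →₀ ℕ) → Prop) : Submodule ℂ (PolyR N) where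
  carrier := {q | ∀ α ∈ q.support, P α}
  zero_mem' := by simp
  add_mem' := by
    intro a b ha hb α hα
    rcases Finset.mem_union.mp (MvPolynomial.support_add hα) with h | h
    · exact ha α h
    · exact hb α h
  smul_mem' := by
    intro c q hq α hα
    exact hq α (MvPolynomial.support_smul hα)

/-- The truncated dual space `D_0^k[I]`: functionals in `D_0[I]` of order at most `k`
(in particular `0` belongs to it). -/
def truncDual {N : ℕ} (I : Ideal (PolyR N)) (k : ℕ) : Submodule ℂ (PolyR N) :=
  dualSpace I ⊓ expSupported (fun α => ∑ i, α i ≤ k)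

/-- The eliminating truncated dual space `E_0^d[I, A]`, where the set of variables `A`
is given by a finite set of indices: functionals in `D_0[I]` with `ord_A ≤ d`. -/
def elimDual {N : ℕ} (I : Ideal (PolyR N)) (A : Finset (Fin N)) (d : ℕ) :
    Submodule ℂ (PolyR N) :=
  dualSpace I ⊓ expSupported (fun α => ∑ i ∈ A, α i ≤ d)

open scoped Classical in
/-- The action `g · q` of the polynomial ring on dual functionals, determined by
`(g·q)(f) = q(g·f)`; concretely `g · ∂^α = Σ_{γ ≤ α} g_γ ∂^{α-γ}`. -/
def dmul {N : ℕ} (g q : PolyR N) : PolyR N :=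
  ∑ γ ∈ g.support, ∑ α ∈ q.support,
    if γ ≤ α then (MvPolynomial.monomial (α - γ)) (g.coeff γ * q.coeff α) else 0

/-- The maximal ideal `m = ⟨x_1,…,x_N⟩` of the origin. -/
def mIdeal (N : ℕ) : Ideal (PolyR N) := Ideal.span (Set.range MvPolynomial.X)

/-- The multiplicative set of polynomials not vanishing at the origin. -/
def atOrigin (N : ℕ) : Submonoid (PolyR N) where
  carrier := {g | MvPolynomial.constantCoeff g ≠ 0}
  one_mem' := by simp
  mul_mem' := by
    intro a b ha hb
    simp only [Set.mem_setOf_eq, map_mul]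
    exact mul_ne_zero ha hb

/-- The local ring `R_0` of the origin: the localization of `R` at the maximal ideal
of the origin. -/
abbrev LocR (N : ℕ) := Localization (atOrigin N)

/-- The extension `I·R_0` of an ideal `I ⊆ R` to the local ring of the origin. -/
def extIdeal {N : ℕ} (I : Ideal (PolyR N)) : Ideal (LocR N) :=
  Ideal.map (algebraMap (PolyR N) (LocR N)) I

/-- The contraction `I·R_0 ∩ R` of the extension of `I` back to `R`. -/
def contExt {N : ℕ} (I : Ideal (PolyR N)) : Ideal (PolyR N) :=
  Ideal.comap (algebraMap (PolyR N) (LocR N)) (extIdeal I)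

/-- The local Hilbert function
`H_I(k) = dim_ℂ R/(I + m^{k+1}) − dim_ℂ R/(I + m^k)`
(note that for `k = 0` the subtrahend vanishes since `m^0 = R`). -/
def hilb {N : ℕ} (I : Ideal (PolyR N)) (k : ℕ) : ℕ :=
  Module.finrank ℂ (PolyR N ⧸ (I + mIdeal N ^ (k + 1)))
    - Module.finrank ℂ (PolyR N ⧸ (I + mIdeal N ^ k))

section AuxProof
open Finsupp
open scoped Pointwise

variable {N : ℕ}

def mdeg {N : ℕ} (α : Fin N →₀ ℕ) : ℕ := ∑ i, α i

lemma mdeg_add (α β : Fin N →₀ ℕ) : mdeg (α + β) = mdeg α + mdeg β := by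
  simp [mdeg, Finset.sum_add_distrib]

lemma mdeg_single (i : Fin N) (n : ℕ) : mdeg (Finsupp.single i n) = n := by
  simp [mdeg, Finsupp.single_apply]

lemma mdeg_mono {α β : Fin N →₀ ℕ} (h : α ≤ β) : mdeg α ≤ mdeg β :=
  Finset.sum_le_sum fun i _ => Finsupp.le_def.mp h i

lemma apply_le_mdeg (α : Fin N →₀ ℕ) (i : Fin N) : α i ≤ mdeg α :=
  Finset.single_le_sum (fun _ _ => Nat.zero_le _) (Finset.mem_univ i)

lemma mdeg_eq_zero {α : Fin N →₀ ℕ} (h : mdeg α = 0) : α = 0 := by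
  ext i
  exact Nat.le_zero.mp (h ▸ apply_le_mdeg α i)

lemma exists_pos_of_mdeg_pos {α : Fin N →₀ ℕ} (h : 0 < mdeg α) : ∃ i, α i ≠ 0 := by
  by_contra hc; push_neg at hc
  have : α = 0 := by ext i; exact hc i
  simp [this, mdeg] at h

lemma erase_add_single_eq (α : Fin N →₀ ℕ) (i : Fin N) :
    Finsupp.erase i α + Finsupp.single i (α i) = α := Finsupp.erase_add_single i α

lemma exists_le_mdeg {k : ℕ} {α : Fin N →₀ ℕ} (h : k ≤ mdeg α) :
    ∃ β ≤ α, mdeg β = k := by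
  obtain ⟨m, hm⟩ := Nat.exists_eq_add_of_le h
  clear h
  induction m generalizing α with
  | zero => exact ⟨α, le_rfl, hm.symm ▸ rfl⟩
  | succ n ih =>
      have hpos : 0 < mdeg α := by omega
      obtain ⟨i, hi⟩ := exists_pos_of_mdeg_pos hpos
      set α' := α - Finsupp.single i 1 with hα'
      have hrec : α' + Finsupp.single i 1 = α := by
        ext j
        by_cases hj : j = i
        · subst hj; simp [hα', Finsupp.single_apply]; omega
        · simp [hα', Finsupp.single_apply, Ne.symm hj, hj]
      have hd : mdeg α' + 1 = mdeg α := by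
        rw [← hrec, mdeg_add, mdeg_single]
      obtain ⟨β, hβ, hβd⟩ := ih (α := α') (by omega)
      exact ⟨β, le_trans hβ (by rw [← hrec]; exact le_add_of_nonneg_right (zero_le)), hβd⟩

lemma finite_mdeg_le (k : ℕ) : {α : Fin N →₀ ℕ | mdeg α ≤ k}.Finite := by
  have : ∀ α ∈ {α : Fin N →₀ ℕ | mdeg α ≤ k}, ∀ i, α i < k + 1 := by
    intro α hα i; exact Nat.lt_succ_of_le (le_trans (apply_le_mdeg α i) hα)
  apply Set.Finite.ofFinset (Finset.univ.filterMap
    (fun f : Fin N → Fin (k+1) =>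
      let a : Fin N →₀ ℕ := Finsupp.onFinset Finset.univ (fun i => (f i : ℕ)) (by simp)
      if mdeg a ≤ k then some a else none) (by
        intro f g a ha hb
        simp only [Option.mem_def, Option.ite_none_right_eq_some, Option.some_inj] at ha hb
        funext i
        have h1 : (f i : ℕ) = a i := by rw [← ha.2]; simp
        have h2 : (g i : ℕ) = a i := by rw [← hb.2]; simp
        exact Fin.ext (h1.trans h2.symm)))
  intro α
  simp only [Finset.mem_filterMap, Finset.mem_univ, true_and, Set.mem_setOf_eq]
  constructor
  · rintro ⟨f, hf⟩
    simp only [Option.mem_def, Option.ite_none_right_eq_some, Option.some_inj] at hf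
    rw [← hf.2]; exact hf.1
  · intro hα
    refine ⟨fun i => ⟨α i, this α hα i⟩, ?_⟩
    have : (Finsupp.onFinset Finset.univ (fun i => α i) (by simp) : Fin N →₀ ℕ) = α := by
      ext i; simp
    simp only [this]
    simp [hα]

lemma finite_level (k : ℕ) : {α : Fin N →₀ ℕ | mdeg α = k}.Finite :=
  (finite_mdeg_le k).subset (fun α hα => le_of_eq hα)

section Comb
variable {N : ℕ} (S : Set (Fin N →₀ ℕ))

/-- `α + ℕ·eᵢ ⊆ S`. -/
def IsRay (α : Fin N →₀ ℕ) (i : Fin N) : Prop :=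
  ∀ t : ℕ, α + Finsupp.single i t ∈ S

variable {S}

lemma IsRay.mem {α : Fin N →₀ ℕ} {i : Fin N} (h : IsRay S α i) : α ∈ S := by
  simpa using h 0

lemma IsRay.add_single {α : Fin N →₀ ℕ} {i : Fin N} (h : IsRay S α i) (c : ℕ) :
    IsRay S (α + Finsupp.single i c) i := by
  intro t
  rw [add_assoc, ← Finsupp.single_add]
  exact h (c + t)

variable (down : ∀ ⦃α β : Fin N →₀ ℕ⦄, α ≤ β → β ∈ S → α ∈ S)

include down in
/-- any β below the `i`-truncation of a ray point is itself a ray base. -/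
lemma ray_sub {γ β : Fin N →₀ ℕ} {i : Fin N} (h : IsRay S γ i)
    (hβ : β ≤ Finsupp.erase i γ) : IsRay S β i := by
  intro t
  refine down ?_ (h t)
  intro j
  simp only [Finsupp.add_apply, Finsupp.single_apply]
  by_cases hj : i = j
  · subst hj
    have : β i ≤ Finsupp.erase i γ i := hβ i
    simp only [Finsupp.erase_same] at this
    simp [Nat.le_zero.mp this]
  · have := hβ j
    simp only [Finsupp.erase_apply, if_neg (Ne.symm hj)] at this
    simp only [if_neg hj, add_zero]
    exact this

include down in
lemma ray_exists (ext : ∀ α ∈ S, ∃ i, α + Finsupp.single i 1 ∈ S)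
    {α : Fin N →₀ ℕ} (hα : α ∈ S) : ∃ i, IsRay S α i := by
  classical
  choose F hF using ext
  let a : ℕ → {γ // γ ∈ S} := fun n =>
    Nat.rec ⟨α, hα⟩ (fun _ p => ⟨p.1 + Finsupp.single (F p.1 p.2) 1, hF p.1 p.2⟩) n
  have hstep : ∀ n, (a (n+1)).1 = (a n).1 + Finsupp.single (F (a n).1 (a n).2) 1 :=
    fun n => rfl
  have hmono : ∀ n, (a n).1 ≤ (a (n+1)).1 := by
    intro n; rw [hstep]; exact le_add_of_nonneg_right (zero_le)
  have hmono' : ∀ m n, m ≤ n → (a m).1 ≤ (a n).1 := by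
    intro m n h
    induction n with
    | zero => simp_all
    | succ p ih =>
        rcases Nat.lt_or_ge m (p+1) with h' | h'
        · exact le_trans (ih (by omega)) (hmono p)
        · have : m = p + 1 := by omega
          subst this; exact le_rfl
  have hdeg : ∀ n, mdeg (a n).1 = mdeg α + n := by
    intro n
    induction n with
    | zero => rfl
    | succ p ih => rw [hstep, mdeg_add, mdeg_single, ih]; omega
  by_contra hc
  push_neg at hc
  simp only [IsRay, not_forall] at hc
  choose t ht using hc
  have key : ∀ n i, (a n).1 i < α i + t i := by
    intro n i
    by_contra hge
    push_neg at hge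
    refine ht i (down ?_ (a n).2)
    intro j
    simp only [Finsupp.add_apply, Finsupp.single_apply]
    by_cases hj : i = j
    · subst hj; rw [if_pos rfl]; omega
    · simp only [if_neg hj, add_zero]
      exact Finsupp.le_def.mp (hmono' 0 n (Nat.zero_le n)) j
  set C := ∑ i, (α i + t i) with hC
  have hle : ∀ n, mdeg (a n).1 ≤ C := by
    intro n
    exact Finset.sum_le_sum fun i _ => le_of_lt (key n i)
  have h1 := hle (C + 1)
  have h2 := hdeg (C + 1)
  omega

end Comb

section Count
variable {N : ℕ} {S : Set (Fin N →₀ ℕ)}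

variable (S) in
def level (m : ℕ) : Set (Fin N →₀ ℕ) := {α | α ∈ S ∧ mdeg α = m}

lemma level_finite (m : ℕ) : (level S m).Finite :=
  (finite_level m).subset fun _ h => h.2

lemma erase_add_single' {β : Fin N →₀ ℕ} {i : Fin N} (h : β i = 0) (t : ℕ) :
    Finsupp.erase i (β + Finsupp.single i t) = β := by
  ext j
  by_cases hj : j = i
  · subst hj; simp [Finsupp.erase_same, h]
  · simp [Finsupp.erase_apply, hj, Finsupp.single_apply, Ne.symm hj]

lemma apply_eq_zero_of_le_erase {β γ : Fin N →₀ ℕ} {i : Fin N}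
    (h : β ≤ Finsupp.erase i γ) : β i = 0 := by
  have := h i
  simpa [Finsupp.erase_same] using this

lemma mdeg_erase_add (γ : Fin N →₀ ℕ) (i : Fin N) :
    mdeg (Finsupp.erase i γ) + γ i = mdeg γ := by
  conv_rhs => rw [← erase_add_single_eq γ i]
  rw [mdeg_add, mdeg_single]

def rayPts (γ : Fin N →₀ ℕ) (i : Fin N) (m : ℕ) : Set (Fin N →₀ ℕ) :=
  (fun β => β + Finsupp.single i (m - mdeg β)) '' {β | β ≤ Finsupp.erase i γ}

variable (down : ∀ ⦃α β : Fin N →₀ ℕ⦄, α ≤ β → β ∈ S → α ∈ S)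

include down in
lemma rayPts_subset {γ : Fin N →₀ ℕ} {i : Fin N} {m : ℕ} (h : IsRay S γ i)
    (hm : mdeg (Finsupp.erase i γ) ≤ m) : rayPts γ i m ⊆ level S m := by
  rintro q ⟨β, hβ, rfl⟩
  have hβd : mdeg β ≤ m := le_trans (mdeg_mono hβ) hm
  refine ⟨ray_sub down h hβ _, ?_⟩
  rw [mdeg_add, mdeg_single]
  omega

include down in
lemma rayPts_ncard_ge {γ : Fin N →₀ ℕ} {i : Fin N} {m : ℕ} (h : IsRay S γ i)
    (hm : mdeg (Finsupp.erase i γ) ≤ m) :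
    mdeg (Finsupp.erase i γ) + 1 ≤ (rayPts γ i m).ncard := by
  have hfin : (rayPts γ i m).Finite := (level_finite m).subset (rayPts_subset down h hm)
  have hsub : Set.Iic (mdeg (Finsupp.erase i γ)) ⊆ (fun q => mdeg (Finsupp.erase i q)) '' rayPts γ i m := by
    intro r hr
    obtain ⟨β, hβ, hβd⟩ := exists_le_mdeg (Set.mem_Iic.mp hr)
    refine ⟨β + Finsupp.single i (m - mdeg β), ⟨β, hβ, rfl⟩, ?_⟩
    simp only [erase_add_single' (apply_eq_zero_of_le_erase hβ), hβd]
  calc mdeg (Finsupp.erase i γ) + 1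
      = (Set.Iic (mdeg (Finsupp.erase i γ))).ncard := by
        rw [← Finset.coe_Iic, Set.ncard_coe_finset, Nat.card_Iic]
    _ ≤ ((fun q => mdeg (Finsupp.erase i q)) '' rayPts γ i m).ncard :=
        Set.ncard_le_ncard hsub (hfin.image _)
    _ ≤ (rayPts γ i m).ncard := Set.ncard_image_le hfin

include down in
lemma ray_base_bound {μ K : ℕ} (hev : ∀ k, K ≤ k → (level S k).ncard = μ)
    {γ : Fin N →₀ ℕ} {i : Fin N} (h : IsRay S γ i) :
    mdeg (Finsupp.erase i γ) + 1 ≤ μ := by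
  set b := mdeg (Finsupp.erase i γ) with hb
  have h1 := rayPts_ncard_ge down h (show b ≤ K + b by omega)
  have h2 : (rayPts γ i (K + b)).ncard ≤ (level S (K + b)).ncard :=
    Set.ncard_le_ncard (rayPts_subset down h (show b ≤ K + b by omega)) (level_finite (K + b))
  rw [hev (K + b) (by omega)] at h2
  omega

lemma pair_le_mdeg {γ : Fin N →₀ ℕ} {i j : Fin N} (hij : i ≠ j) :
    γ i + γ j ≤ mdeg γ := by
  have : ({i, j} : Finset (Fin N)) ⊆ Finset.univ := Finset.subset_univ _
  calc γ i + γ j = ∑ l ∈ ({i, j} : Finset (Fin N)), γ l := (Finset.sum_pair hij).symm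
    _ ≤ mdeg γ := Finset.sum_le_sum_of_subset this

include down in
lemma no_two_rays {μ K : ℕ} (hev : ∀ k, K ≤ k → (level S k).ncard = μ)
    {γ : Fin N →₀ ℕ} {i j : Fin N} (hij : i ≠ j)
    (hi : IsRay S γ i) (hj : IsRay S γ j) :
    mdeg γ + 2 ≤ μ := by
  set k := mdeg γ with hk
  set m := K + k + 1 with hm
  have hbi : mdeg (Finsupp.erase i γ) + γ i = k := mdeg_erase_add γ i
  have hbj : mdeg (Finsupp.erase j γ) + γ j = k := mdeg_erase_add γ j
  have hmi : mdeg (Finsupp.erase i γ) ≤ m := by omega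
  have hmj : mdeg (Finsupp.erase j γ) ≤ m := by omega
  have hdisj : Disjoint (rayPts γ i m) (rayPts γ j m) := by
    rw [Set.disjoint_left]
    rintro q ⟨β, hβ, hqi⟩ ⟨β', hβ', hqj⟩
    have h1 : q i = m - mdeg β := by
      rw [← hqi]
      simp [apply_eq_zero_of_le_erase hβ, Finsupp.single_apply]
    have h2 : q i = β' i := by
      rw [← hqj]
      simp [Finsupp.single_apply, Ne.symm hij]
    have h3 : β' i ≤ γ i := by
      have := hβ' i
      simpa [Finsupp.erase_apply, hij] using this
    have h4 : mdeg β ≤ mdeg (Finsupp.erase i γ) := mdeg_mono hβ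
    omega
  have hiu : rayPts γ i m ∪ rayPts γ j m ⊆ level S m :=
    Set.union_subset (rayPts_subset down hi hmi) (rayPts_subset down hj hmj)
  have hfin : (level S m).Finite := level_finite m
  have hcard : (rayPts γ i m).ncard + (rayPts γ j m).ncard ≤ (level S m).ncard := by
    rw [← Set.ncard_union_eq hdisj (hfin.subset ((Set.subset_union_left).trans hiu))
      (hfin.subset ((Set.subset_union_right).trans hiu))]
    exact Set.ncard_le_ncard hiu hfin
  have e1 := rayPts_ncard_ge down hi hmi
  have e2 := rayPts_ncard_ge down hj hmj
  have hp : γ i + γ j ≤ k := pair_le_mdeg hij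
  rw [hev m (by omega)] at hcard
  omega

end Count

theorem comb_main {N : ℕ} {S : Set (Fin N →₀ ℕ)}
    (down : ∀ ⦃α β : Fin N →₀ ℕ⦄, α ≤ β → β ∈ S → α ∈ S)
    (ext : ∀ α ∈ S, ∃ i, α + Finsupp.single i 1 ∈ S)
    {μ K : ℕ} (hev : ∀ k, K ≤ k → (level S k).ncard = μ) :
    ∀ k, μ - 1 ≤ k → (level S k).ncard = μ := by
  classical
  intro k hk
  set k' := K + k with hk'
  have hray : ∀ γ, γ ∈ S → ∃ i, IsRay S γ i := fun γ h => ray_exists down ext h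
  choose d hd using hray
  -- upward injection
  have h1 : (level S k).ncard ≤ (level S k').ncard := by
    set f : (Fin N →₀ ℕ) → (Fin N →₀ ℕ) := fun γ =>
      if h : γ ∈ S then γ + Finsupp.single (d γ h) (k' - k) else γ with hf
    have hmaps : ∀ γ ∈ level S k, f γ ∈ level S k' := by
      rintro γ ⟨hγS, hγd⟩
      rw [hf]; simp only [dif_pos hγS]
      exact ⟨hd γ hγS (k' - k), by rw [mdeg_add, mdeg_single]; omega⟩
    have hinj : Set.InjOn f (level S k) := by
      rintro γ ⟨hγS, hγd⟩ γ' ⟨hγ'S, hγ'd⟩ heq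
      rw [hf] at heq
      simp only [dif_pos hγS, dif_pos hγ'S] at heq
      by_cases hij : d γ hγS = d γ' hγ'S
      · rw [hij] at heq
        exact add_right_cancel heq
      · exfalso
        have r1 : IsRay S (γ + Finsupp.single (d γ hγS) (k' - k)) (d γ hγS) :=
          (hd γ hγS).add_single _
        have r2 : IsRay S (γ + Finsupp.single (d γ hγS) (k' - k)) (d γ' hγ'S) := by
          rw [heq]; exact (hd γ' hγ'S).add_single _
        have := no_two_rays down hev hij r1 r2
        rw [mdeg_add, mdeg_single, hγd] at this
        omega
    calc (level S k).ncard = (f '' level S k).ncard :=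
          (Set.ncard_image_of_injOn hinj).symm
      _ ≤ (level S k').ncard := Set.ncard_le_ncard
          (Set.image_subset_iff.mpr hmaps) (level_finite k')
  -- downward injection
  have h2 : (level S k').ncard ≤ (level S k).ncard := by
    set g : (Fin N →₀ ℕ) → (Fin N →₀ ℕ) := fun δ =>
      if h : δ ∈ S then
        Finsupp.erase (d δ h) δ +
          Finsupp.single (d δ h) (k - mdeg (Finsupp.erase (d δ h) δ))
      else δ with hg
    have hbase : ∀ δ (h : δ ∈ S), mdeg (Finsupp.erase (d δ h) δ) ≤ k := by
      intro δ h
      have := ray_base_bound down hev (hd δ h)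
      omega
    have hmaps : ∀ δ ∈ level S k', g δ ∈ level S k := by
      rintro δ ⟨hδS, hδd⟩
      rw [hg]; simp only [dif_pos hδS]
      constructor
      · exact ray_sub down (hd δ hδS) le_rfl _
      · rw [mdeg_add, mdeg_single]
        have := hbase δ hδS
        omega
    have hinj : Set.InjOn g (level S k') := by
      rintro δ ⟨hδS, hδd⟩ δ' ⟨hδ'S, hδ'd⟩ heq
      rw [hg] at heq
      simp only [dif_pos hδS, dif_pos hδ'S] at heq
      set i := d δ hδS with hi
      set j := d δ' hδ'S with hj
      by_cases hij : i = j
      · rw [← hij] at heq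
        have hz : (Finsupp.erase i δ) i = 0 := Finsupp.erase_same
        have hz' : (Finsupp.erase i δ') i = 0 := Finsupp.erase_same
        have he : Finsupp.erase i δ = Finsupp.erase i δ' := by
          have e1 := erase_add_single' hz (k - mdeg (Finsupp.erase i δ))
          have e2 := erase_add_single' hz' (k - mdeg (Finsupp.erase i δ'))
          rw [← e1, heq, e2]
        have hm : mdeg (Finsupp.erase i δ) = mdeg (Finsupp.erase i δ') := by rw [he]
        have d1 := mdeg_erase_add δ i
        have d2 := mdeg_erase_add δ' i
        have : δ i = δ' i := by rw [hδd] at d1; rw [hδ'd] at d2; omega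
        calc δ = Finsupp.erase i δ + Finsupp.single i (δ i) := (erase_add_single_eq δ i).symm
          _ = Finsupp.erase i δ' + Finsupp.single i (δ' i) := by rw [he, this]
          _ = δ' := erase_add_single_eq δ' i
      · exfalso
        have r1 : IsRay S (Finsupp.erase i δ + Finsupp.single i (k - mdeg (Finsupp.erase i δ))) i :=
          (ray_sub down (hd δ hδS) le_rfl).add_single _
        have r2 : IsRay S (Finsupp.erase i δ + Finsupp.single i (k - mdeg (Finsupp.erase i δ))) j := by
          rw [heq]
          exact (ray_sub down (hd δ' hδ'S) le_rfl).add_single _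
        have hnt := no_two_rays down hev hij r1 r2
        have hb := hbase δ hδS
        rw [mdeg_add, mdeg_single] at hnt
        rw [← hi] at hb
        omega
    calc (level S k').ncard = (g '' level S k').ncard :=
          (Set.ncard_image_of_injOn hinj).symm
      _ ≤ (level S k).ncard := Set.ncard_le_ncard
          (Set.image_subset_iff.mpr hmaps) (level_finite k)
  have := hev k' (by omega)
  omega

section Algebra
variable {N : ℕ} (J : Ideal (PolyR N))

/-- up-closedness of the exponent set of any ideal. -/
lemma mono_up {α β : Fin N →₀ ℕ} (hα : (monomial α (1:ℂ) : PolyR N) ∈ J)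
    (hle : α ≤ β) : (monomial β (1:ℂ) : PolyR N) ∈ J := by
  obtain ⟨c, rfl⟩ := exists_add_of_le hle
  have : (monomial (α + c) (1:ℂ) : PolyR N) = monomial α 1 * monomial c 1 := by
    rw [monomial_mul, one_mul]
  rw [this]
  exact Ideal.mul_mem_right _ _ hα

variable (hmono : ∃ G : Set (PolyR N),
    (∀ g ∈ G, ∃ α, g = MvPolynomial.monomial α (1 : ℂ)) ∧ Ideal.span G = J)

include hmono in
lemma span_eq : J = Ideal.span ((fun α => monomial α (1:ℂ)) ''
    {α | (monomial α (1:ℂ) : PolyR N) ∈ J}) := by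
  obtain ⟨G, hG, hspan⟩ := hmono
  apply le_antisymm
  · rw [← hspan]
    apply Ideal.span_le.mpr
    intro g hg
    obtain ⟨α, rfl⟩ := hG g hg
    exact Ideal.subset_span ⟨α, Ideal.subset_span hg, rfl⟩
  · apply Ideal.span_le.mpr
    rintro g ⟨α, hα, rfl⟩
    exact hα

include hmono in
lemma memJ_iff (f : PolyR N) :
    f ∈ J ↔ ∀ α ∈ f.support, (monomial α (1:ℂ) : PolyR N) ∈ J := by
  constructor
  · intro hf α hα
    rw [span_eq J hmono] at hf
    obtain ⟨s, hs, hsle⟩ := mem_ideal_span_monomial_image.mp hf α hα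
    exact mono_up J hs hsle
  · intro h
    rw [← MvPolynomial.support_sum_monomial_coeff f]
    apply Ideal.sum_mem
    intro α hα
    have : (monomial α (f.coeff α) : PolyR N) = f.coeff α • monomial α 1 := by
      rw [smul_monomial, smul_eq_mul, mul_one]
    rw [this]
    exact Submodule.smul_of_tower_mem _ _ (h α hα)

lemma mpow_eq (k : ℕ) : (mIdeal N) ^ k =
    Ideal.span ((fun α => monomial α (1:ℂ)) '' {α | mdeg α = k}) := by
  induction k with
  | zero =>
      rw [pow_zero]
      have h0 : {α : Fin N →₀ ℕ | mdeg α = 0} = {0} := by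
        ext α
        simp only [Set.mem_setOf_eq, Set.mem_singleton_iff]
        exact ⟨mdeg_eq_zero, fun h => by simp [h, mdeg]⟩
      rw [h0, Ideal.one_eq_top]
      simp only [Set.image_singleton, monomial_zero', C_1]
      rw [Ideal.span_singleton_one]
  | succ k ih =>
      have hm1 : mIdeal N = Ideal.span ((fun α => monomial α (1:ℂ)) '' {α | mdeg α = 1}) := by
        have : (Set.range (MvPolynomial.X : Fin N → PolyR N)) =
            (fun α => monomial α (1:ℂ)) '' {α | mdeg α = 1} := by
          ext g
          constructor
          · rintro ⟨i, rfl⟩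
            exact ⟨Finsupp.single i 1, mdeg_single i 1, rfl⟩
          · rintro ⟨α, hα, rfl⟩
            have hα1 : mdeg α = 1 := hα
            obtain ⟨i, hi⟩ := exists_pos_of_mdeg_pos (α := α) (by omega)
            have hkey : α = Finsupp.single i 1 := by
              have h1 : α i ≤ 1 := hα1 ▸ apply_le_mdeg α i
              have hs : Finsupp.single i (α i) ≤ α := by
                intro j
                simp only [Finsupp.single_apply]
                split <;> simp_all
              obtain ⟨c, hc⟩ := exists_add_of_le hs
              have hc0 : mdeg c = 0 := by
                have := mdeg_add (Finsupp.single i (α i)) c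
                rw [← hc, mdeg_single] at this
                omega
              rw [hc, mdeg_eq_zero hc0, add_zero]
              congr 1
              omega
            rw [hkey]
            exact ⟨i, rfl⟩
        rw [mIdeal, this]
      rw [pow_succ, ih, hm1, Ideal.span_mul_span']
      congr 1
      ext g
      constructor
      · rintro ⟨a, ⟨α, hα, rfl⟩, b, ⟨β, hβ, rfl⟩, rfl⟩
        refine ⟨α + β, ?_, by simp only [monomial_mul, one_mul]⟩
        rw [Set.mem_setOf_eq, mdeg_add, hα, hβ]
      · rintro ⟨γ, hγ, rfl⟩
        rw [Set.mem_setOf_eq] at hγ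
        obtain ⟨β, hβle, hβd⟩ := exists_le_mdeg (k := k) (α := γ) (by omega)
        obtain ⟨c, hc⟩ := exists_add_of_le hβle
        have hcd : mdeg c = 1 := by
          have := mdeg_add β c
          rw [← hc] at this
          omega
        exact ⟨monomial β 1, ⟨β, hβd, rfl⟩, monomial c 1, ⟨c, hcd, rfl⟩,
          by simp only [monomial_mul, one_mul, ← hc]⟩

include hmono in
lemma memIk_iff (k : ℕ) (f : PolyR N) :
    f ∈ J + mIdeal N ^ k ↔
      ∀ α ∈ f.support, (monomial α (1:ℂ) : PolyR N) ∈ J ∨ k ≤ mdeg α := by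
  have : J + mIdeal N ^ k = Ideal.span ((fun α => monomial α (1:ℂ)) ''
      ({α | (monomial α (1:ℂ) : PolyR N) ∈ J} ∪ {α | mdeg α = k})) := by
    rw [Set.image_union, Ideal.span_union, ← mpow_eq, ← span_eq J hmono,
      Submodule.add_eq_sup]
  rw [this, mem_ideal_span_monomial_image]
  constructor
  · intro h α hα
    obtain ⟨s, hs, hsle⟩ := h α hα
    rcases hs with hs | hs
    · exact Or.inl (mono_up J hs hsle)
    · exact Or.inr (hs ▸ mdeg_mono hsle)
  · intro h α hα
    rcases h α hα with h' | h'
    · exact ⟨α, Or.inl h', le_rfl⟩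
    · obtain ⟨β, hβle, hβd⟩ := exists_le_mdeg h'
      exact ⟨β, Or.inr hβd, hβle⟩

end Algebra

section Dim
variable {N : ℕ} (J : Ideal (PolyR N))
variable (hmono : ∃ G : Set (PolyR N),
    (∀ g ∈ G, ∃ α, g = MvPolynomial.monomial α (1 : ℂ)) ∧ Ideal.span G = J)

include hmono in
lemma finrank_quot (k : ℕ) :
    Module.finrank ℂ (PolyR N ⧸ (J + mIdeal N ^ k)) =
      {α : Fin N →₀ ℕ | (monomial α (1:ℂ) : PolyR N) ∉ J ∧ mdeg α < k}.ncard := by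
  classical
  set I := J + mIdeal N ^ k with hI
  set P := {α : Fin N →₀ ℕ | (monomial α (1:ℂ) : PolyR N) ∉ J ∧ mdeg α < k} with hP
  have hPfin : P.Finite := (finite_mdeg_le _).subset (fun α hα => le_of_lt hα.2)
  haveI := hPfin.fintype
  have hmem : ∀ f : PolyR N, f ∈ I ↔ ∀ α ∈ f.support, α ∉ P := by
    intro f
    rw [hI, memIk_iff J hmono k f]
    constructor
    · intro h α hα hαP
      rcases h α hα with h' | h'
      · exact hαP.1 h'
      · exact absurd hαP.2 (by omega)
    · intro h α hα
      by_contra hc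
      push_neg at hc
      exact h α hα ⟨hc.1, by omega⟩
  set lmk := (Ideal.Quotient.mkₐ ℂ I).toLinearMap with hlmk
  have hlmk_eq : ∀ f : PolyR N, lmk f = Ideal.Quotient.mk I f := fun f => by
    rw [hlmk]; simp [Ideal.Quotient.mkₐ_eq_mk]
  set b : P → (PolyR N ⧸ I) := fun s => lmk (monomial s.1 1) with hb
  have hli : LinearIndependent ℂ b := by
    rw [Fintype.linearIndependent_iff]
    intro g hg s
    by_contra hgs
    set q : PolyR N := ∑ i : P, monomial i.1 (g i) with hq
    have hlq : lmk q = 0 := by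
      rw [hq, map_sum]
      rw [← hg]
      apply Finset.sum_congr rfl
      intro i _
      rw [hb]
      have : (monomial i.1 (g i) : PolyR N) = g i • monomial i.1 1 := by
        rw [smul_monomial, smul_eq_mul, mul_one]
      rw [this, map_smul]
    have hqmem : q ∈ I := by
      rw [← Ideal.Quotient.eq_zero_iff_mem, ← hlmk_eq q]
      exact hlq
    have hcoeff : q.coeff s.1 = g s := by
      rw [hq, coeff_sum]
      have hcond : ∀ i : P, ((i : Fin N →₀ ℕ) = s.1) = (i = s) :=
        fun i => propext ⟨fun h => Subtype.ext h, fun h => by rw [h]⟩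
      simp only [coeff_monomial, hcond]
      rw [Finset.sum_ite_eq' Finset.univ s g]
      simp
    have hsup : s.1 ∈ q.support := MvPolynomial.mem_support_iff.mpr (by rw [hcoeff]; exact hgs)
    exact (hmem q).mp hqmem s.1 hsup s.2
  have hsp : ⊤ ≤ Submodule.span ℂ (Set.range b) := by
    rintro x -
    obtain ⟨f, rfl⟩ := Ideal.Quotient.mk_surjective x
    set t := f.support.filter (fun α => α ∈ P) with ht
    set f' : PolyR N := ∑ α ∈ t, monomial α (f.coeff α) with hf'
    have hcoeff' : ∀ α, f'.coeff α = if α ∈ t then f.coeff α else 0 := by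
      intro α
      rw [hf', coeff_sum]
      simp only [coeff_monomial]
      rw [Finset.sum_ite_eq' t α (fun β => f.coeff β)]
    have hdiff : f - f' ∈ I := by
      rw [hmem]
      intro α hα hαP
      rw [MvPolynomial.mem_support_iff] at hα
      apply hα
      rw [coeff_sub, hcoeff']
      by_cases hf : α ∈ f.support
      · rw [if_pos (Finset.mem_filter.mpr ⟨hf, hαP⟩), sub_self]
      · rw [MvPolynomial.mem_support_iff, not_not] at hf
        rw [hf, if_neg, sub_zero]
        intro hc
        exact absurd (Finset.mem_filter.mp hc).1 (by rw [MvPolynomial.mem_support_iff, hf]; simp)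
    have heqq : Ideal.Quotient.mk I f = Ideal.Quotient.mk I f' :=
      Ideal.Quotient.eq.mpr hdiff
    rw [heqq, ← hlmk_eq f']
    have : f' = ∑ a ∈ t.attach, monomial a.1 (f.coeff a.1) := by
      rw [hf', ← Finset.sum_attach t (fun α => monomial α (f.coeff α))]
    rw [this, map_sum]
    apply Submodule.sum_mem
    rintro ⟨α, hαt⟩ -
    have hαP : α ∈ P := (Finset.mem_filter.mp hαt).2
    have : (monomial α (f.coeff α) : PolyR N) = f.coeff α • monomial α 1 := by
      rw [smul_monomial, smul_eq_mul, mul_one]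
    rw [this, map_smul]
    exact Submodule.smul_mem _ _ (Submodule.subset_span ⟨⟨α, hαP⟩, rfl⟩)
  let B : Module.Basis P ℂ (PolyR N ⧸ I) := Module.Basis.mk hli hsp
  rw [Module.finrank_eq_card_basis B, ← Nat.card_coe_set_eq, Nat.card_eq_fintype_card]

include hmono in
lemma hilb_eq (k : ℕ) :
    hilb J k = {α : Fin N →₀ ℕ | (monomial α (1:ℂ) : PolyR N) ∉ J ∧ mdeg α = k}.ncard := by
  rw [hilb, finrank_quot J hmono, finrank_quot J hmono]
  have hsplit : {α : Fin N →₀ ℕ | (monomial α (1:ℂ) : PolyR N) ∉ J ∧ mdeg α < k + 1} =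
      {α : Fin N →₀ ℕ | (monomial α (1:ℂ) : PolyR N) ∉ J ∧ mdeg α < k} ∪
      {α : Fin N →₀ ℕ | (monomial α (1:ℂ) : PolyR N) ∉ J ∧ mdeg α = k} := by
    ext α
    simp only [Set.mem_setOf_eq, Set.mem_union]
    constructor
    · rintro ⟨h1, h2⟩
      rcases Nat.lt_or_ge (mdeg α) k with h | h
      · exact Or.inl ⟨h1, h⟩
      · exact Or.inr ⟨h1, by omega⟩
    · rintro (⟨h1, h2⟩ | ⟨h1, h2⟩) <;> exact ⟨h1, by omega⟩
  have hdisj : Disjoint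
      {α : Fin N →₀ ℕ | (monomial α (1:ℂ) : PolyR N) ∉ J ∧ mdeg α < k}
      {α : Fin N →₀ ℕ | (monomial α (1:ℂ) : PolyR N) ∉ J ∧ mdeg α = k} := by
    rw [Set.disjoint_left]
    rintro α ⟨_, h1⟩ ⟨_, h2⟩
    omega
  rw [hsplit, Set.ncard_union_eq hdisj
    ((finite_mdeg_le _).subset (fun α hα => le_of_lt hα.2))
    ((finite_mdeg_le _).subset (fun α hα => le_of_eq hα.2))]
  omega

end Dim

/-- Let `J ⊆ R` be a monomial ideal saturated with respect to the
maximal ideal of the origin (`J : m^∞ = J`) whose local Hilbert function is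
eventually equal to a constant `μ ≥ 1`.  Then `H_J(k) = μ` for all `k ≥ μ − 1`,
i.e. the regularity index of the local Hilbert function of `J` is at most `μ − 1`. -/
theorem statement19 {N : ℕ} (hN : 1 ≤ N) (J : Ideal (PolyR N))
    (hmono : ∃ G : Set (PolyR N),
      (∀ g ∈ G, ∃ α, g = MvPolynomial.monomial α (1 : ℂ)) ∧ Ideal.span G = J)
    (hsat : {f : PolyR N | ∃ k : ℕ, ∀ g ∈ mIdeal N ^ k, f * g ∈ J}
      = (J : Set (PolyR N)))
    (μ : ℕ) (hμ : 1 ≤ μ)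
    (hconst : ∃ K : ℕ, ∀ k, K ≤ k → hilb J k = μ) :
    ∀ k, μ - 1 ≤ k → hilb J k = μ := by
  classical
  obtain ⟨K, hK⟩ := hconst
  set S : Set (Fin N →₀ ℕ) := {α | (monomial α (1:ℂ) : PolyR N) ∉ J} with hS
  have down : ∀ ⦃α β : Fin N →₀ ℕ⦄, α ≤ β → β ∈ S → α ∈ S :=
    fun α β hle hβ hc => hβ (mono_up J hc hle)
  have hext : ∀ α ∈ S, ∃ i, α + Finsupp.single i 1 ∈ S := by
    intro α hα
    have hf : (monomial α (1:ℂ) : PolyR N) ∉ J := hα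
    have hfn : (monomial α (1:ℂ) : PolyR N) ∉
        {f : PolyR N | ∃ k : ℕ, ∀ g ∈ mIdeal N ^ k, f * g ∈ J} := by
      rw [hsat]; exact hf
    rw [Set.mem_setOf_eq] at hfn
    push_neg at hfn
    obtain ⟨g, hg, hfg⟩ := hfn 1
    rw [pow_one] at hg
    -- find a bad exponent of the product
    have hprod : ∃ γ ∈ (monomial α (1:ℂ) * g : PolyR N).support,
        (monomial γ (1:ℂ) : PolyR N) ∉ J := by
      by_contra hc
      push_neg at hc
      exact hfg ((memJ_iff J hmono _).mpr hc)
    obtain ⟨γ, hγsup, hγ⟩ := hprod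
    have hγ' : γ ∈ (monomial α (1:ℂ) : PolyR N).support + g.support :=
      MvPolynomial.support_mul _ g hγsup
    rw [Finset.mem_add] at hγ'
    obtain ⟨a, ha, β, hβ, rfl⟩ := hγ'
    rw [support_monomial, if_neg (one_ne_zero)] at ha
    rw [Finset.mem_singleton] at ha
    subst ha
    -- β has positive degree
    have hgm : g ∈ Ideal.span ((fun α => monomial α (1:ℂ)) ''
        {α : Fin N →₀ ℕ | mdeg α = 1}) := by rw [← mpow_eq 1, pow_one]; exact hg
    obtain ⟨s, hs, hsle⟩ := mem_ideal_span_monomial_image.mp hgm β hβ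
    have hβpos : 0 < mdeg β := by
      have := mdeg_mono hsle
      rw [Set.mem_setOf_eq] at hs
      omega
    obtain ⟨i, hi⟩ := exists_pos_of_mdeg_pos hβpos
    refine ⟨i, down ?_ hγ⟩
    exact add_le_add_right (Finsupp.single_le_iff.mpr (Nat.one_le_iff_ne_zero.mpr hi)) _
  have hev : ∀ k, K ≤ k → Set.ncard {α | α ∈ S ∧ mdeg α = k} = μ := by
    intro k hk
    rw [← hK k hk, hilb_eq J hmono k]
    rfl
  intro k hk
  rw [hilb_eq J hmono k]
  exact comb_main down hext hev k hk

end AuxProof
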